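/- Let ε ∈ ℝ, m₁, m₂ ∈ ℕ, and let u : ℝ × ℝ → ℂ be such that u(t, x + 2π) = u(t, x) for all t, x, u is continuously differentiable in t, twice continuously differentiable in x, with ∂u/∂t and ∂²u/∂x² jointly continuous. For n ∈ ℤ define c_n(t) := (1/(2π)) ∫_{−π}^{π} u(t,x) e^{−i n x} dx. Suppose ∂u/∂t (t,x) = ∂²u/∂x² (t,x) + ε · (c_{m₁}(t) + c_{−m₁}(t)) · (c_{m₂}(t) + c_{−m₂}(t)) for all t ∈ [0,1] and x ∈ ℝ. Then for all ℓ, k ∈ ℕ and n₁, …, n_k ∈ ℤ: ∏_{j=1}^k c_{n_j}(1) − 0^ℓ ∏_{j=1}^k c_{n_j}(0) = ∫₀¹ ℓ t^{ℓ−1} ∏_{j=1}^k c_{n_j}(t) dt − Σ_{j=1}^k n_j² ∫₀¹ t^ℓ ∏_{j=1}^k c_{n_j}(t) dt + ε Σ_{j=1}^k δ_{n_j,0} ∫₀¹ t^ℓ ( ∏_{i≠j} c_{n_i}(t) ) · (c_{m₁}(t) + c_{−m₁}(t)) · (c_{m₂}(t) + c_{−m₂}(t)) dt, where δ_{n,0}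 is 1 if n = 0 and 0 otherwise, 0⁰ = 1 and the term ℓ t^{ℓ−1} vanishes identically when ℓ = 0. -/

import Mathlib

/-- The `n`-th Fourier coefficient of `u(t,·)`:
`c_n(t) = (1/(2π)) ∫_{-π}^{π} u(t,x) e^{-inx} dx`. -/
noncomputable def fourierCoeffHeat (u : ℝ × ℝ → ℂ) (n : ℤ) (t : ℝ) : ℂ :=
  (2 * (Real.pi : ℂ))⁻¹ *
    ∫ x in (-Real.pi)..Real.pi, u (t, x) * Complex.exp (-Complex.I * (n : ℂ) * (x : ℂ))

/-!
Testing the equation against `e^{-inx}` and integrating by parts twice over a period turns it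
into the linear system `c_n' = -n² c_n + δ_{n,0} ε (c_{m₁} + c_{-m₁})(c_{m₂} + c_{-m₂})`, since the
forcing is constant in `x`. The identity is the fundamental theorem of calculus on `[0, 1]` for
`t^ℓ ∏ⱼ c_{n_j}(t)`, expanded by the product rule and this system.
-/

open MeasureTheory Set Real

noncomputable def fourierExp (n : ℤ) (x : ℝ) : ℂ := Complex.exp (-Complex.I * n * x)

theorem continuous_fourierExp (n : ℤ) : Continuous (fourierExp n) := by
  unfold fourierExp; fun_prop

theorem hasDerivAt_fourierExp (n : ℤ) (x : ℝ) :
    HasDerivAt (fourierExp n) (-Complex.I * n * fourierExp n x) x := by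
  unfold fourierExp
  simpa [mul_comm] using
    (((hasDerivAt_id (x : ℂ)).const_mul (-Complex.I * n)).cexp).comp_ofReal

theorem fourierExp_neg_pi (n : ℤ) : fourierExp n (-π) = fourierExp n π := by
  rw [fourierExp, fourierExp, show -Complex.I * n * ((-π : ℝ) : ℂ)
      = -Complex.I * n * π + n * (2 * π * Complex.I) by push_cast; ring,
    Complex.exp_add, Complex.exp_int_mul_two_pi_mul_I, mul_one]

theorem integral_fourierExp (n : ℤ) :
    ∫ x in -π..π, fourierExp n x = if n = 0 then 2 * (π : ℂ) else 0 := by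
  split_ifs with hn
  · simp [fourierExp, hn, Complex.real_smul]; ring
  · have hc : -Complex.I * n ≠ 0 := by simp [hn]
    rw [show (fun x : ℝ => fourierExp n x) = fun x : ℝ => Complex.exp (-Complex.I * n * x) from rfl,
      integral_exp_mul_complex hc, ← fourierExp, ← fourierExp, fourierExp_neg_pi, sub_self,
      zero_div]

theorem Function.Periodic.periodic_of_hasDerivAt {E : Type*} [NormedAddCommGroup E]
    [NormedSpace ℝ E] {f f' : ℝ → E} {c : ℝ} (hf : Function.Periodic f c)
    (hd : ∀ x, HasDerivAt f (f' x) x) : Function.Periodic f' c := fun x => by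
  have h := (hd (x + c)).comp_add_const x c
  rw [show (fun y => f (y + c)) = f from funext hf] at h
  exact h.unique (hd x)

theorem Function.Periodic.apply_pi_eq_apply_neg_pi {E : Type*} {f : ℝ → E}
    (hf : Function.Periodic f (2 * π)) : f π = f (-π) := by
  simpa [show -π + 2 * π = π by ring] using hf (-π)

theorem integral_deriv_mul_fourierExp {f f' : ℝ → ℂ} (hf : ∀ x, HasDerivAt f (f' x) x)
    (hf' : IntervalIntegrable f' volume (-π) π) (hper : f π = f (-π)) (n : ℤ) :
    ∫ x in -π..π, f' x * fourierExp n x = Complex.I * n * ∫ x in -π..π, f x * fourierExp n x := by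
  have hparts := intervalIntegral.integral_mul_deriv_eq_deriv_mul
    (fun x _ => hasDerivAt_fourierExp n x) (fun x _ => hf x)
    ((continuous_const.mul (continuous_fourierExp n)).intervalIntegrable _ _) hf'
  have hswap : ∀ x, -Complex.I * n * fourierExp n x * f x
      = -Complex.I * n * (f x * fourierExp n x) := fun x => by ring
  simp_rw [hswap, intervalIntegral.integral_const_mul, hper, fourierExp_neg_pi, sub_self,
    zero_sub] at hparts
  simp_rw [mul_comm (f' _), hparts]
  ring

theorem integral_deriv_deriv_mul_fourierExp {f f' f'' : ℝ → ℂ}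
    (hper : Function.Periodic f (2 * π)) (hf : ∀ x, HasDerivAt f (f' x) x)
    (hf' : ∀ x, HasDerivAt f' (f'' x) x)
    (hf'' : IntervalIntegrable f'' volume (-π) π) (n : ℤ) :
    ∫ x in -π..π, f'' x * fourierExp n x = -(n : ℂ) ^ 2 * ∫ x in -π..π, f x * fourierExp n x := by
  have hcont : Continuous f' := continuous_iff_continuousAt.2 fun x => (hf' x).continuousAt
  rw [integral_deriv_mul_fourierExp hf' hf''
      (hper.periodic_of_hasDerivAt hf).apply_pi_eq_apply_neg_pi,
    integral_deriv_mul_fourierExp hf (hcont.intervalIntegrable _ _) hper.apply_pi_eq_apply_neg_pi]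
  linear_combination (n : ℂ) ^ 2 * (∫ x in -π..π, f x * fourierExp n x) * Complex.I_sq

theorem hasDerivAt_intervalIntegral_of_continuous {E : Type*} [NormedAddCommGroup E]
    [NormedSpace ℝ E] {F F' : ℝ × ℝ → E} {a b : ℝ} (hF : ∀ t, Continuous fun x => F (t, x))
    (hF' : Continuous F') (hd : ∀ t x, HasDerivAt (fun s => F (s, x)) (F' (t, x)) t) (t₀ : ℝ) :
    HasDerivAt (fun t => ∫ x in a..b, F (t, x)) (∫ x in a..b, F' (t₀, x)) t₀ := by
  obtain ⟨C, hC⟩ := (isCompact_Icc.prod isCompact_uIcc).exists_bound_of_continuousOn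
    (s := Icc (t₀ - 1) (t₀ + 1) ×ˢ uIcc a b) hF'.continuousOn
  refine (intervalIntegral.hasDerivAt_integral_of_dominated_loc_of_deriv_le
    (F := fun t x => F (t, x)) (F' := fun t x => F' (t, x)) (bound := fun _ => C)
    (Metric.ball_mem_nhds t₀ one_pos)
    (.of_forall fun t => (hF t).aestronglyMeasurable) ((hF t₀).intervalIntegrable _ _)
    (hF'.comp (Continuous.prodMk_right t₀)).aestronglyMeasurable ?_ intervalIntegrable_const
    (.of_forall fun x _ t _ => hd t x)).2
  refine .of_forall fun x hx t ht => hC (t, x) ⟨?_, uIoc_subset_uIcc hx⟩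
  rw [Metric.mem_ball, Real.dist_eq, abs_sub_lt_iff] at ht
  constructor <;> linarith

theorem fourierCoeffHeat_eq_integral (u : ℝ × ℝ → ℂ) (n : ℤ) (t : ℝ) :
    fourierCoeffHeat u n t = (2 * (π : ℂ))⁻¹ * ∫ x in -π..π, u (t, x) * fourierExp n x :=
  rfl

theorem hasDerivAt_fourierCoeffHeat {u ut : ℝ × ℝ → ℂ} (hu : ∀ t, Continuous fun x => u (t, x))
    (hut : Continuous ut) (hdt : ∀ t x, HasDerivAt (fun s => u (s, x)) (ut (t, x)) t)
    (n : ℤ) (t : ℝ) : HasDerivAt (fourierCoeffHeat u n) (fourierCoeffHeat ut n t) t :=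
  (hasDerivAt_intervalIntegral_of_continuous (F := fun p => u p * fourierExp n p.2)
    (F' := fun p => ut p * fourierExp n p.2) (fun t => (hu t).mul (continuous_fourierExp n))
    (hut.mul ((continuous_fourierExp n).comp continuous_snd))
    (fun t x => (hdt t x).mul_const (fourierExp n x)) t).const_mul _

theorem fourierCoeffHeat_of_eq_add_const {u ut ux uxx : ℝ × ℝ → ℂ} {t : ℝ} {g : ℂ}
    (hper : Function.Periodic (fun x => u (t, x)) (2 * π))
    (hdx : ∀ x, HasDerivAt (fun y => u (t, y)) (ux (t, x)) x)
    (hdxx : ∀ x, HasDerivAt (fun y => ux (t, y)) (uxx (t, x)) x)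
    (huxx : Continuous fun x => uxx (t, x)) (hpde : ∀ x, ut (t, x) = uxx (t, x) + g) (n : ℤ) :
    fourierCoeffHeat ut n t = -(n : ℂ) ^ 2 * fourierCoeffHeat u n t + if n = 0 then g else 0 := by
  have hsplit : ∫ x in -π..π, ut (t, x) * fourierExp n x
      = (∫ x in -π..π, uxx (t, x) * fourierExp n x) + g * ∫ x in -π..π, fourierExp n x := by
    simp_rw [hpde, add_mul, ← intervalIntegral.integral_const_mul]
    exact intervalIntegral.integral_add
      ((huxx.mul (continuous_fourierExp n)).intervalIntegrable _ _)
      ((continuous_const.mul (continuous_fourierExp n)).intervalIntegrable _ _)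
  rw [fourierCoeffHeat_eq_integral, hsplit, integral_fourierExp,
    integral_deriv_deriv_mul_fourierExp hper hdx hdxx (huxx.intervalIntegrable _ _),
    fourierCoeffHeat_eq_integral]
  split_ifs
  · field_simp
  · ring

theorem prod_sub_eq_integral_of_hasDerivAt {ι : Type*} [Fintype ι] [DecidableEq ι] (ℓ : ℕ)
    {f f' : ι → ℝ → ℂ} (hf : ∀ j, ∀ t ∈ Icc (0 : ℝ) 1, HasDerivAt (f j) (f' j t) t)
    (hf' : ∀ j, IntervalIntegrable (f' j) volume 0 1) :
    ∏ j, f j 1 - 0 ^ ℓ * ∏ j, f j 0 =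
      (∫ t in (0 : ℝ)..1, (ℓ : ℂ) * (t : ℂ) ^ (ℓ - 1) * ∏ j, f j t) +
      ∫ t in (0 : ℝ)..1, (t : ℂ) ^ ℓ * ∑ j, (∏ i ∈ Finset.univ.erase j, f i t) * f' j t := by
  rw [← uIcc_of_le zero_le_one] at hf
  have hprod : ∀ t ∈ uIcc (0 : ℝ) 1, HasDerivAt (fun s => ∏ j, f j s)
      (∑ j, (∏ i ∈ Finset.univ.erase j, f i t) * f' j t) t := fun t ht => by
    simpa using HasDerivAt.fun_finsetProd fun j _ => hf j t ht
  have hprod_cont : ContinuousOn (fun s => ∏ j, f j s) (uIcc 0 1) := fun t ht =>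
    (hprod t ht).continuousAt.continuousWithinAt
  have hderiv_int : IntervalIntegrable
      (fun t => ∑ j, (∏ i ∈ Finset.univ.erase j, f i t) * f' j t) volume 0 1 := by
    simpa only [← Finset.sum_fn] using IntervalIntegrable.sum _ fun j _ =>
      (hf' j).continuousOn_mul <| continuousOn_finsetProd _ fun i _ t ht =>
        (hf i t ht).continuousAt.continuousWithinAt
  have hparts := intervalIntegral.integral_deriv_mul_eq_sub
    (fun t _ => (hasDerivAt_pow ℓ (t : ℂ)).comp_ofReal) hprod
    ((by fun_prop : Continuous fun t : ℝ => (ℓ : ℂ) * (t : ℂ) ^ (ℓ - 1)).intervalIntegrable _ _)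
    hderiv_int
  rw [intervalIntegral.integral_add
    (ContinuousOn.intervalIntegrable (u := fun t => (ℓ : ℂ) * (t : ℂ) ^ (ℓ - 1) * ∏ j, f j t)
      ((by fun_prop : Continuous fun t : ℝ => (ℓ : ℂ) * (t : ℂ) ^ (ℓ - 1)).continuousOn.mul
        hprod_cont))
    (hderiv_int.continuousOn_mul (by fun_prop : Continuous fun t : ℝ => (t : ℂ) ^ ℓ).continuousOn)]
    at hparts
  simpa using hparts.symm

theorem prod_sub_eq_integral_of_linear_ode {ι : Type*} [Fintype ι] [DecidableEq ι] (ℓ : ℕ)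
    {c : ι → ℝ → ℂ} {g : ℝ → ℂ} (a b : ι → ℂ)
    (hc : ∀ j, ∀ t ∈ Icc (0 : ℝ) 1, HasDerivAt (c j) (a j * c j t + b j * g t) t)
    (hg : ContinuousOn g (Icc 0 1)) :
    ∏ j, c j 1 - 0 ^ ℓ * ∏ j, c j 0 =
      (∫ t in (0 : ℝ)..1, (ℓ : ℂ) * (t : ℂ) ^ (ℓ - 1) * ∏ j, c j t) +
      (∑ j, a j) * (∫ t in (0 : ℝ)..1, (t : ℂ) ^ ℓ * ∏ j, c j t) +
      ∑ j, b j * ∫ t in (0 : ℝ)..1, (t : ℂ) ^ ℓ * (∏ i ∈ Finset.univ.erase j, c i t) * g t := by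
  have hcont : ∀ j, ContinuousOn (c j) (uIcc 0 1) := fun j t ht =>
    (hc j t (by rwa [uIcc_of_le zero_le_one] at ht)).continuousAt.continuousWithinAt
  rw [← uIcc_of_le zero_le_one] at hg
  have hsplit : ∀ t : ℝ,
      (t : ℂ) ^ ℓ * ∑ j, (∏ i ∈ Finset.univ.erase j, c i t) * (a j * c j t + b j * g t) =
        (∑ j, a j) * ((t : ℂ) ^ ℓ * ∏ j, c j t) +
        ∑ j, b j * ((t : ℂ) ^ ℓ * (∏ i ∈ Finset.univ.erase j, c i t) * g t) := fun t => by
    rw [Finset.mul_sum, Finset.sum_mul, ← Finset.sum_add_distrib]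
    refine Finset.sum_congr rfl fun j _ => ?_
    rw [← Finset.mul_prod_erase Finset.univ (c · t) (Finset.mem_univ j)]
    ring
  rw [prod_sub_eq_integral_of_hasDerivAt ℓ hc fun j =>
      ((continuousOn_const.mul (hcont j)).add (continuousOn_const.mul hg)).intervalIntegrable,
    intervalIntegral.integral_congr fun t _ => hsplit t, add_assoc,
    intervalIntegral.integral_add, intervalIntegral.integral_const_mul,
    intervalIntegral.integral_finsetSum]
  · simp_rw [intervalIntegral.integral_const_mul]
  · exact fun j _ => ContinuousOn.intervalIntegrable (by fun_prop)
  all_goals exact ContinuousOn.intervalIntegrable (by fun_prop)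

theorem linear_moment_equation_heat_distributed_nonlinearity_general
    (ε : ℝ) (m₁ m₂ : ℕ) (u ut ux uxx : ℝ × ℝ → ℂ)
    (hper : ∀ t x : ℝ, u (t, x + 2 * Real.pi) = u (t, x))
    (hut : Continuous ut) (huxx : Continuous uxx)
    (hdt : ∀ t x : ℝ, HasDerivAt (fun s => u (s, x)) (ut (t, x)) t)
    (hdx : ∀ t x : ℝ, HasDerivAt (fun y => u (t, y)) (ux (t, x)) x)
    (hdxx : ∀ t x : ℝ, HasDerivAt (fun y => ux (t, y)) (uxx (t, x)) x)
    (hpde : ∀ t ∈ Set.Icc (0:ℝ) 1, ∀ x : ℝ,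
      ut (t, x) = uxx (t, x) +
        (ε : ℂ) * (fourierCoeffHeat u (m₁ : ℤ) t + fourierCoeffHeat u (-(m₁ : ℤ)) t) *
          (fourierCoeffHeat u (m₂ : ℤ) t + fourierCoeffHeat u (-(m₂ : ℤ)) t)) :
    ∀ (ℓ k : ℕ) (n : Fin k → ℤ),
      (∏ j, fourierCoeffHeat u (n j) 1) - (0 : ℂ) ^ ℓ * ∏ j, fourierCoeffHeat u (n j) 0 =
        (∫ t in (0:ℝ)..1, (ℓ : ℂ) * (t : ℂ) ^ (ℓ - 1) * ∏ j, fourierCoeffHeat u (n j) t) -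
        (∑ j, ((n j : ℂ)) ^ 2) *
          (∫ t in (0:ℝ)..1, (t : ℂ) ^ ℓ * ∏ j, fourierCoeffHeat u (n j) t) +
        (ε : ℂ) * ∑ j, (if n j = 0 then (1 : ℂ) else 0) *
          ∫ t in (0:ℝ)..1, (t : ℂ) ^ ℓ *
            (∏ i ∈ Finset.univ.erase j, fourierCoeffHeat u (n i) t) *
            ((fourierCoeffHeat u (m₁ : ℤ) t + fourierCoeffHeat u (-(m₁ : ℤ)) t) *
              (fourierCoeffHeat u (m₂ : ℤ) t + fourierCoeffHeat u (-(m₂ : ℤ)) t)) := by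
  intro ℓ k n
  set g : ℝ → ℂ := fun t =>
    (fourierCoeffHeat u (m₁ : ℤ) t + fourierCoeffHeat u (-(m₁ : ℤ)) t) *
      (fourierCoeffHeat u (m₂ : ℤ) t + fourierCoeffHeat u (-(m₂ : ℤ)) t)
  have hu : ∀ t, Continuous fun x => u (t, x) := fun t =>
    continuous_iff_continuousAt.2 fun x => (hdx t x).continuousAt
  have hcoeff : ∀ N, Continuous (fourierCoeffHeat u N) := fun N =>
    continuous_iff_continuousAt.2 fun t => (hasDerivAt_fourierCoeffHeat hu hut hdt N t).continuousAt
  have hode : ∀ j, ∀ t ∈ Icc (0 : ℝ) 1, HasDerivAt (fourierCoeffHeat u (n j))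
      (-(n j : ℂ) ^ 2 * fourierCoeffHeat u (n j) t + (ε * if n j = 0 then 1 else 0) * g t) t :=
    fun j t ht => by
      convert hasDerivAt_fourierCoeffHeat hu hut hdt (n j) t using 1
      rw [fourierCoeffHeat_of_eq_add_const (hper t) (hdx t) (hdxx t)
        (huxx.comp (Continuous.prodMk_right t)) (hpde t ht)]
      split_ifs <;> ring
  rw [prod_sub_eq_integral_of_linear_ode ℓ _ _ hode (by fun_prop)]
  simp [g, Finset.mul_sum, mul_assoc, sub_eq_add_neg]

/-- Linear moment equation (7.7)–(7.8) for the heat equation with distributed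
quadratic nonlinearity
`∂u/∂t = ∂²u/∂x² + ε (c_{m₁}+c_{-m₁})(c_{m₂}+c_{-m₂})`. -/
theorem linear_moment_equation_heat_distributed_nonlinearity
    (ε : ℝ) (m₁ m₂ : ℕ) (u ut ux uxx : ℝ × ℝ → ℂ)
    (hper : ∀ t x : ℝ, u (t, x + 2 * Real.pi) = u (t, x))
    (hu : Continuous u) (hux : Continuous ux)
    (hut : Continuous ut) (huxx : Continuous uxx)
    (hdt : ∀ t x : ℝ, HasDerivAt (fun s => u (s, x)) (ut (t, x)) t)
    (hdx : ∀ t x : ℝ, HasDerivAt (fun y => u (t, y)) (ux (t, x)) x)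
    (hdxx : ∀ t x : ℝ, HasDerivAt (fun y => ux (t, y)) (uxx (t, x)) x)
    (hpde : ∀ t ∈ Set.Icc (0:ℝ) 1, ∀ x : ℝ,
      ut (t, x) = uxx (t, x) +
        (ε : ℂ) * (fourierCoeffHeat u (m₁ : ℤ) t + fourierCoeffHeat u (-(m₁ : ℤ)) t) *
          (fourierCoeffHeat u (m₂ : ℤ) t + fourierCoeffHeat u (-(m₂ : ℤ)) t)) :
    ∀ (ℓ k : ℕ) (n : Fin k → ℤ),
      (∏ j, fourierCoeffHeat u (n j) 1) - (0 : ℂ) ^ ℓ * ∏ j, fourierCoeffHeat u (n j) 0 =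
        (∫ t in (0:ℝ)..1, (ℓ : ℂ) * (t : ℂ) ^ (ℓ - 1) * ∏ j, fourierCoeffHeat u (n j) t) -
        (∑ j, ((n j : ℂ)) ^ 2) *
          (∫ t in (0:ℝ)..1, (t : ℂ) ^ ℓ * ∏ j, fourierCoeffHeat u (n j) t) +
        (ε : ℂ) * ∑ j, (if n j = 0 then (1 : ℂ) else 0) *
          ∫ t in (0:ℝ)..1, (t : ℂ) ^ ℓ *
            (∏ i ∈ Finset.univ.erase j, fourierCoeffHeat u (n i) t) *
            ((fourierCoeffHeat u (m₁ : ℤ) t + fourierCoeffHeat u (-(m₁ : ℤ)) t) *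
              (fourierCoeffHeat u (m₂ : ℤ) t + fourierCoeffHeat u (-(m₂ : ℤ)) t)) :=
  linear_moment_equation_heat_distributed_nonlinearity_general ε m₁ m₂ u ut ux uxx hper hut huxx hdt
    hdx hdxx hpde
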